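/- arXiv:1107.1153 — 3 statements merged into one kernel-verified Lean document; each statement's English description precedes it below -/
import Mathlib

section
/- Let W : [0,1]² → ℝ≥0 be a bounded symmetric measurable function and d = ∫∫ W(x,y) dx dy. Then for every n ≥ 1, the path density t(Pₙ, W) = ∫ ∏_{i=1}^{n} W(x_i, x_{i+1}) dx₁⋯dx_{n+1} satisfies t(Pₙ, W) ≥ dⁿ. -/
/-!
Write `F_j x` for the total weight of walks of length `j` starting at `x`, so that
`t(Pₙ, W) = ∫ F_n` and `d = ∫ F_1`. If `W` is bounded away from `0` and `∞`, Hölder's inequality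
applied to the splitting
`W x y = (W x y * F_k y) ^ (1/(k+1)) * (W x y * F_k y ^ (-1/k)) ^ (k/(k+1))`
gives `F_1 ≤ F_{k+1} ^ (1/(k+1)) * G_k ^ (k/(k+1))` with `G_k x = ∫ W x y * F_k y ^ (-1/k) dy`.
By symmetry of `W`, `∫ G_k = ∫ F_1 * F_k ^ (-1/k)`, and integrating the same pointwise bound shows
by induction on `k` that this is at most `1`. A second application of Hölder then yields
`∫ F_1 ≤ (∫ F_{k+1}) ^ (1/(k+1))`. A general bounded `W` is handled through `W + ε`, letting `ε → 0`
by dominated convergence.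
-/

open MeasureTheory Real unitInterval
open Filter Topology
open scoped ENNReal

namespace BlakleyRoy

variable {α : Type*} [MeasurableSpace α] {μ : Measure α} {V : α → α → ℝ≥0∞}

noncomputable def walkWeight (μ : Measure α) (V : α → α → ℝ≥0∞) : ℕ → α → ℝ≥0∞
  | 0 => 1
  | j + 1 => fun x => ∫⁻ y, V x y * walkWeight μ V j y ∂μ

noncomputable def pathHomDensity (μ : Measure α) (V : α → α → ℝ≥0∞) (n : ℕ) : ℝ≥0∞ :=
  ∫⁻ x : Fin (n + 1) → α, ∏ i : Fin n, V (x i.castSucc) (x i.succ) ∂Measure.pi fun _ => μ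

@[simp] lemma walkWeight_zero : walkWeight μ V 0 = 1 := rfl

lemma walkWeight_succ (j : ℕ) (x : α) :
    walkWeight μ V (j + 1) x = ∫⁻ y, V x y * walkWeight μ V j y ∂μ := rfl

lemma walkWeight_one (x : α) : walkWeight μ V 1 x = ∫⁻ y, V x y ∂μ := by
  simp [walkWeight_succ]

lemma measurable_walkWeight [SFinite μ] (hV : Measurable (Function.uncurry V)) (j : ℕ) :
    Measurable (walkWeight μ V j) := by
  induction j with
  | zero => exact measurable_const
  | succ j ih => exact (hV.mul (ih.comp measurable_snd)).lintegral_prod_right'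

lemma measurable_pi_apply_apply {β : Type*} [MeasurableSpace β] {V : α → α → β}
    (hV : Measurable (Function.uncurry V)) {m : ℕ} (i j : Fin m) :
    Measurable fun x : Fin m → α => V (x i) (x j) :=
  hV.comp (f := fun x : Fin m → α => (x i, x j)) (by fun_prop)

lemma lintegral_mul_prod_eq_lintegral_mul_walkWeight [SigmaFinite μ]
    (hV : Measurable (Function.uncurry V)) (n : ℕ) {φ : α → ℝ≥0∞} (hφ : Measurable φ) :
    ∫⁻ x : Fin (n + 1) → α, φ (x 0) * ∏ i : Fin n, V (x i.castSucc) (x i.succ)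
        ∂Measure.pi (fun _ => μ) = ∫⁻ y, φ y * walkWeight μ V n y ∂μ := by
  induction n generalizing φ with
  | zero =>
    simp only [Finset.univ_eq_empty, Finset.prod_empty, mul_one, walkWeight_zero, Pi.one_apply]
    rw [← (measurePreserving_funUnique μ (Fin 1)).lintegral_comp_emb
      (MeasurableEquiv.measurableEmbedding _) φ]
    rfl
  | succ n ih =>
    rw [← ((measurePreserving_piFinSuccAbove (fun _ => μ) 0).symm).lintegral_comp_emb
      (MeasurableEquiv.measurableEmbedding _)]
    simp only [MeasurableEquiv.piFinSuccAbove_symm_apply, Fin.insertNthEquiv, Equiv.coe_fn_mk,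
      Fin.insertNth_zero, Fin.prod_univ_succ, Fin.castSucc_zero, ← Fin.succ_castSucc,
      Fin.cons_succ, Fin.cons_zero, cast_eq]
    have hprod : Measurable fun x : Fin (n + 1) → α => ∏ i : Fin n, V (x i.castSucc) (x i.succ) :=
      Finset.measurable_prod _ fun i _ => measurable_pi_apply_apply hV _ _
    have htail (x : α) : Measurable fun xs : Fin (n + 1) → α =>
        V x (xs 0) * ∏ i : Fin n, V (xs i.castSucc) (xs i.succ) :=
      (hV.of_uncurry_left.comp (measurable_pi_apply 0)).mul hprod
    have hjoint : Measurable fun z : α × (Fin (n + 1) → α) =>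
        φ z.1 * (V z.1 (z.2 0) * ∏ i : Fin n, V (z.2 i.castSucc) (z.2 i.succ)) :=
      (hφ.comp measurable_fst).mul
        ((hV.comp (measurable_fst.prodMk ((measurable_pi_apply 0).comp measurable_snd))).mul
          (hprod.comp measurable_snd))
    rw [lintegral_prod _ hjoint.aemeasurable]
    refine lintegral_congr fun x => ?_
    dsimp only
    rw [lintegral_const_mul _ (htail x), walkWeight_succ, ih hV.of_uncurry_left]

lemma pathHomDensity_eq_lintegral_walkWeight [SigmaFinite μ]
    (hV : Measurable (Function.uncurry V)) (n : ℕ) :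
    pathHomDensity μ V n = ∫⁻ x, walkWeight μ V n x ∂μ := by
  unfold pathHomDensity
  simpa using lintegral_mul_prod_eq_lintegral_mul_walkWeight hV n (φ := 1) measurable_const

lemma walkWeight_le_pow [IsProbabilityMeasure μ] {c : ℝ≥0∞} (hVc : ∀ x y, V x y ≤ c)
    (j : ℕ) (x : α) : walkWeight μ V j x ≤ c ^ j := by
  induction j generalizing x with
  | zero => simp
  | succ j ih =>
    calc walkWeight μ V (j + 1) x ≤ ∫⁻ _, c * c ^ j ∂μ :=
          lintegral_mono fun y => mul_le_mul' (hVc x y) (ih y)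
      _ = c ^ (j + 1) := by simp [pow_succ']

lemma pow_le_walkWeight [IsProbabilityMeasure μ] {e : ℝ≥0∞} (heV : ∀ x y, e ≤ V x y)
    (j : ℕ) (x : α) : e ^ j ≤ walkWeight μ V j x := by
  induction j generalizing x with
  | zero => simp
  | succ j ih =>
    calc e ^ (j + 1) = ∫⁻ _, e * e ^ j ∂μ := by simp [pow_succ']
      _ ≤ walkWeight μ V (j + 1) x := lintegral_mono fun y => mul_le_mul' (heV x y) (ih y)

lemma pathHomDensity_le_pow [IsProbabilityMeasure μ] {c : ℝ≥0∞} (hVc : ∀ x y, V x y ≤ c)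
    (n : ℕ) : pathHomDensity μ V n ≤ c ^ n :=
  calc pathHomDensity μ V n ≤ ∫⁻ _ : Fin (n + 1) → α, c ^ n ∂Measure.pi fun _ => μ :=
        lintegral_mono fun x =>
          (Finset.prod_le_pow_card _ _ c fun i _ => hVc _ _).trans_eq (by simp)
    _ = c ^ n := by simp

lemma lintegral_lintegral_mul_eq_lintegral_walkWeight_one_mul [SFinite μ]
    (hV : Measurable (Function.uncurry V)) (hsym : ∀ x y, V x y = V y x)
    {g : α → ℝ≥0∞} (hg : Measurable g) :
    ∫⁻ x, ∫⁻ y, V x y * g y ∂μ ∂μ = ∫⁻ y, walkWeight μ V 1 y * g y ∂μ := by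
  rw [lintegral_lintegral_swap (hV.mul (hg.comp measurable_snd)).aemeasurable]
  refine lintegral_congr fun y => ?_
  rw [lintegral_mul_const _ hV.of_uncurry_right, walkWeight_one]
  simp_rw [hsym _ y]

lemma mul_rpow_mul_mul_rpow_neg_inv_rpow (a : ℝ≥0∞) {b : ℝ≥0∞} (hb0 : b ≠ 0) (hbt : b ≠ ⊤)
    {r : ℝ} (hr : 0 < r) :
    (a * b) ^ (1 / (r + 1)) * (a * b ^ (-r⁻¹)) ^ (r / (r + 1)) = a := by
  have hp : (0 : ℝ) ≤ 1 / (r + 1) := by positivity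
  have hq : (0 : ℝ) ≤ r / (r + 1) := by positivity
  rw [ENNReal.mul_rpow_of_nonneg _ _ hp, ENNReal.mul_rpow_of_nonneg _ _ hq, ← ENNReal.rpow_mul,
    mul_mul_mul_comm, ← ENNReal.rpow_add_of_nonneg _ _ hp hq, ← ENNReal.rpow_add _ _ hb0 hbt]
  have hpq : 1 / (r + 1) + r / (r + 1) = 1 := by field_simp; ring
  have hcancel : 1 / (r + 1) + -r⁻¹ * (r / (r + 1)) = 0 := by field_simp; ring
  rw [hpq, hcancel, ENNReal.rpow_one, ENNReal.rpow_zero, mul_one]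

lemma lintegral_rpow_le_rpow_lintegral [IsProbabilityMeasure μ] {f : α → ℝ≥0∞}
    (hf : AEMeasurable f μ) {q : ℝ} (hq₀ : 0 ≤ q) (hq₁ : q ≤ 1) :
    ∫⁻ x, f x ^ q ∂μ ≤ (∫⁻ x, f x ∂μ) ^ q := by
  simpa using ENNReal.lintegral_mul_norm_pow_le hf aemeasurable_const hq₀ (sub_nonneg.2 hq₁)
    (add_sub_cancel q 1) (g := 1)

lemma walkWeight_one_le_rpow_mul_rpow [SFinite μ] (hV : Measurable (Function.uncurry V))
    {k : ℕ} (hk : 0 < k) (h0 : ∀ y, walkWeight μ V k y ≠ 0) (htop : ∀ y, walkWeight μ V k y ≠ ⊤)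
    (x : α) :
    walkWeight μ V 1 x ≤ walkWeight μ V (k + 1) x ^ (1 / ((k : ℝ) + 1)) *
      (∫⁻ y, V x y * walkWeight μ V k y ^ (-(k : ℝ)⁻¹) ∂μ) ^ ((k : ℝ) / (k + 1)) := by
  have hF := measurable_walkWeight (μ := μ) hV k
  calc walkWeight μ V 1 x
      = ∫⁻ y, (V x y * walkWeight μ V k y) ^ (1 / ((k : ℝ) + 1)) *
          (V x y * walkWeight μ V k y ^ (-(k : ℝ)⁻¹)) ^ ((k : ℝ) / (k + 1)) ∂μ := by
        rw [walkWeight_one]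
        exact lintegral_congr fun y => (mul_rpow_mul_mul_rpow_neg_inv_rpow _ (h0 y) (htop y)
          (Nat.cast_pos.2 hk)).symm
    _ ≤ _ := ENNReal.lintegral_mul_norm_pow_le (hV.of_uncurry_left.mul hF).aemeasurable
          (hV.of_uncurry_left.mul (hF.pow_const _)).aemeasurable (by positivity) (by positivity)
          (by field_simp; ring)

lemma lintegral_walkWeight_one_mul_rpow_neg_inv_le_one [IsProbabilityMeasure μ]
    (hV : Measurable (Function.uncurry V)) (hsym : ∀ x y, V x y = V y x)
    (h0 : ∀ j x, walkWeight μ V j x ≠ 0) (htop : ∀ j x, walkWeight μ V j x ≠ ⊤)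
    {k : ℕ} (hk : 0 < k) :
    ∫⁻ y, walkWeight μ V 1 y * walkWeight μ V k y ^ (-(k : ℝ)⁻¹) ∂μ ≤ 1 := by
  induction k, hk using Nat.le_induction with
  | base =>
    calc _ = ∫⁻ _, 1 ∂μ := lintegral_congr fun y => by
            simpa [ENNReal.rpow_neg_one] using ENNReal.mul_inv_cancel (h0 1 y) (htop 1 y)
      _ ≤ 1 := by simp
  | succ k hk ih =>
    set G := fun x => ∫⁻ y, V x y * walkWeight μ V k y ^ (-(k : ℝ)⁻¹) ∂μ
    have hq : (0 : ℝ) ≤ k / (k + 1) := by positivity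
    have hG : Measurable G :=
      (hV.mul (((measurable_walkWeight hV k).pow_const _).comp measurable_snd)).lintegral_prod_right'
    have hpt (x : α) : walkWeight μ V 1 x * walkWeight μ V (k + 1) x ^ (-((k + 1 : ℕ) : ℝ)⁻¹) ≤
        G x ^ ((k : ℝ) / (k + 1)) := by
      set F := walkWeight μ V (k + 1) x
      calc walkWeight μ V 1 x * F ^ (-((k + 1 : ℕ) : ℝ)⁻¹)
          ≤ F ^ (1 / ((k : ℝ) + 1)) * G x ^ ((k : ℝ) / (k + 1)) * F ^ (-((k + 1 : ℕ) : ℝ)⁻¹) := by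
            gcongr
            exact walkWeight_one_le_rpow_mul_rpow hV hk (h0 k) (htop k) x
        _ = G x ^ ((k : ℝ) / (k + 1)) * F ^ (1 / ((k : ℝ) + 1) + -((k + 1 : ℕ) : ℝ)⁻¹) := by
            rw [ENNReal.rpow_add _ _ (h0 _ x) (htop _ x)]; ring
        _ = G x ^ ((k : ℝ) / (k + 1)) := by push_cast; simp
    calc _ ≤ ∫⁻ x, G x ^ ((k : ℝ) / (k + 1)) ∂μ := lintegral_mono hpt
      _ ≤ (∫⁻ x, G x ∂μ) ^ ((k : ℝ) / (k + 1)) :=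
          lintegral_rpow_le_rpow_lintegral hG.aemeasurable hq
            (div_le_one_of_le₀ (by linarith) (by positivity))
      _ ≤ 1 := by
          rw [lintegral_lintegral_mul_eq_lintegral_walkWeight_one_mul hV hsym
            ((measurable_walkWeight hV k).pow_const _)]
          exact ENNReal.rpow_le_one ih hq

lemma pow_lintegral_walkWeight_one_le [IsProbabilityMeasure μ]
    (hV : Measurable (Function.uncurry V)) (hsym : ∀ x y, V x y = V y x)
    (h0 : ∀ j x, walkWeight μ V j x ≠ 0) (htop : ∀ j x, walkWeight μ V j x ≠ ⊤) (n : ℕ) :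
    (∫⁻ x, walkWeight μ V 1 x ∂μ) ^ n ≤ ∫⁻ x, walkWeight μ V n x ∂μ := by
  obtain _ | _ | k := n
  · simp
  · simp
  have hk : 0 < k + 1 := k.succ_pos
  set p : ℝ := 1 / (((k + 1 : ℕ) : ℝ) + 1)
  set q : ℝ := ((k + 1 : ℕ) : ℝ) / (((k + 1 : ℕ) : ℝ) + 1)
  have hF := measurable_walkWeight (μ := μ) hV (k + 1)
  have hD : ∫⁻ x, walkWeight μ V 1 x ∂μ ≤ (∫⁻ x, walkWeight μ V (k + 2) x ∂μ) ^ p :=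
    calc ∫⁻ x, walkWeight μ V 1 x ∂μ
        ≤ ∫⁻ x, walkWeight μ V (k + 2) x ^ p *
            (∫⁻ y, V x y * walkWeight μ V (k + 1) y ^ (-((k + 1 : ℕ) : ℝ)⁻¹) ∂μ) ^ q ∂μ :=
          lintegral_mono fun x => walkWeight_one_le_rpow_mul_rpow hV hk (h0 _) (htop _) x
      _ ≤ (∫⁻ x, walkWeight μ V (k + 2) x ∂μ) ^ p *
            (∫⁻ x, ∫⁻ y, V x y * walkWeight μ V (k + 1) y ^ (-((k + 1 : ℕ) : ℝ)⁻¹) ∂μ ∂μ) ^ q :=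
          ENNReal.lintegral_mul_norm_pow_le (measurable_walkWeight hV _).aemeasurable
            (hV.mul ((hF.pow_const _).comp measurable_snd)).lintegral_prod_right'.aemeasurable
            (by positivity) (by positivity) (by simp only [p, q]; field_simp; ring)
      _ ≤ (∫⁻ x, walkWeight μ V (k + 2) x ∂μ) ^ p := by
          rw [lintegral_lintegral_mul_eq_lintegral_walkWeight_one_mul hV hsym (hF.pow_const _)]
          exact mul_le_of_le_one_right' (ENNReal.rpow_le_one
            (lintegral_walkWeight_one_mul_rpow_neg_inv_le_one hV hsym h0 htop hk) (by positivity))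
  calc (∫⁻ x, walkWeight μ V 1 x ∂μ) ^ (k + 2)
      ≤ ((∫⁻ x, walkWeight μ V (k + 2) x ∂μ) ^ p) ^ (k + 2) := pow_le_pow_left' hD _
    _ = ∫⁻ x, walkWeight μ V (k + 2) x ∂μ := by
        have hp : p * ((k + 2 : ℕ) : ℝ) = 1 := by simp only [p]; push_cast; field_simp; ring
        rw [← ENNReal.rpow_natCast, ← ENNReal.rpow_mul, hp, ENNReal.rpow_one]

lemma pow_lintegral_lintegral_le_pathHomDensity_of_le_of_le [IsProbabilityMeasure μ]
    (hV : Measurable (Function.uncurry V)) (hsym : ∀ x y, V x y = V y x) {e c : ℝ≥0∞}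
    (he : e ≠ 0) (hc : c ≠ ⊤) (heV : ∀ x y, e ≤ V x y) (hVc : ∀ x y, V x y ≤ c) (n : ℕ) :
    (∫⁻ x, ∫⁻ y, V x y ∂μ ∂μ) ^ n ≤ pathHomDensity μ V n := by
  rw [pathHomDensity_eq_lintegral_walkWeight hV]
  simpa only [walkWeight_one] using pow_lintegral_walkWeight_one_le hV hsym
    (fun j x => ((pow_ne_zero j he).bot_lt.trans_le (pow_le_walkWeight heV j x)).ne')
    (fun j x => ne_top_of_le_ne_top (ENNReal.pow_ne_top hc) (walkWeight_le_pow hVc j x)) n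

lemma tendsto_pathHomDensity_add_inv_natCast [IsProbabilityMeasure μ]
    (hV : Measurable (Function.uncurry V)) {c : ℝ≥0∞} (hc : c ≠ ⊤) (hVc : ∀ x y, V x y ≤ c)
    (n : ℕ) :
    Tendsto (fun k : ℕ => pathHomDensity μ (fun x y => V x y + (k : ℝ≥0∞)⁻¹) n)
      atTop (𝓝 (pathHomDensity μ V n)) := by
  refine tendsto_lintegral_filter_of_dominated_convergence (fun _ => (c + 1) ^ n)
    (Eventually.of_forall fun k =>
      Finset.measurable_prod _ fun i _ =>
        measurable_pi_apply_apply (V := fun x y => V x y + (k : ℝ≥0∞)⁻¹) (hV.add_const _) _ _)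
    (eventually_atTop.2 ⟨1, fun k hk => ae_of_all _ fun x =>
      (Finset.prod_le_pow_card _ _ _ fun i _ =>
        add_le_add (hVc _ _) (ENNReal.inv_le_one.2 (by exact_mod_cast hk))).trans_eq (by simp)⟩)
    (by simp [hc]) (ae_of_all _ fun x => ?_)
  refine ENNReal.tendsto_finsetProd_of_ne_top _ (fun i _ => ?_)
    (fun i _ => ne_top_of_le_ne_top hc (hVc _ _))
  simpa using tendsto_const_nhds.add ENNReal.tendsto_inv_nat_nhds_zero

theorem pow_lintegral_lintegral_le_pathHomDensity [IsProbabilityMeasure μ]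
    (hV : Measurable (Function.uncurry V)) (hsym : ∀ x y, V x y = V y x) {c : ℝ≥0∞}
    (hc : c ≠ ⊤) (hVc : ∀ x y, V x y ≤ c) (n : ℕ) :
    (∫⁻ x, ∫⁻ y, V x y ∂μ ∂μ) ^ n ≤ pathHomDensity μ V n := by
  refine ge_of_tendsto (tendsto_pathHomDensity_add_inv_natCast hV hc hVc n)
    (eventually_atTop.2 ⟨1, fun k hk => ?_⟩)
  calc (∫⁻ x, ∫⁻ y, V x y ∂μ ∂μ) ^ n ≤ (∫⁻ x, ∫⁻ y, V x y + (k : ℝ≥0∞)⁻¹ ∂μ ∂μ) ^ n := by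
        gcongr
        exact le_self_add
    _ ≤ _ := pow_lintegral_lintegral_le_pathHomDensity_of_le_of_le (hV.add_const _)
        (fun x y => by rw [hsym]) (ENNReal.inv_ne_zero.2 (ENNReal.natCast_ne_top k))
        (ENNReal.add_ne_top.2 ⟨hc, ENNReal.one_ne_top⟩) (fun x y => le_add_self)
        (fun x y => add_le_add (hVc x y) (ENNReal.inv_le_one.2 (by exact_mod_cast hk))) n

end BlakleyRoy

open BlakleyRoy

theorem blakley_roy_general (W : I → I → ℝ)
    (hmeas : Measurable (Function.uncurry W))
    (hnonneg : ∀ x y, 0 ≤ W x y)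
    (hbdd : ∃ C : ℝ, ∀ x y, W x y ≤ C)
    (hsym : ∀ x y, W x y = W y x)
    (d : ℝ) (hd : d = ∫ x : I, ∫ y : I, W x y)
    (n : ℕ) :
    (∫ x : Fin (n + 1) → I, ∏ i : Fin n, W (x i.castSucc) (x i.succ)) ≥ d ^ n := by
  obtain ⟨C, hC⟩ := hbdd
  set V : I → I → ℝ≥0∞ := fun x y => ENNReal.ofReal (W x y)
  have hV : Measurable (Function.uncurry V) := ENNReal.measurable_ofReal.comp hmeas
  have hVC (x y : I) : V x y ≤ ENNReal.ofReal C := ENNReal.ofReal_le_ofReal (hC x y)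
  have hd' : d = (∫⁻ x, ∫⁻ y, V x y).toReal := by
    have hL : Measurable fun x => ∫⁻ y, V x y := hV.lintegral_prod_right'
    rw [hd, ← integral_toReal hL.aemeasurable (ae_of_all _ fun x =>
      (lintegral_mono (hVC x)).trans_lt (by simp))]
    exact integral_congr_ae (ae_of_all _ fun x => integral_eq_lintegral_of_nonneg_ae
      (ae_of_all _ (hnonneg x)) hmeas.of_uncurry_left.aestronglyMeasurable)
  have ht : ∫ x : Fin (n + 1) → I, ∏ i : Fin n, W (x i.castSucc) (x i.succ) =
      (pathHomDensity volume V n).toReal := by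
    rw [integral_eq_lintegral_of_nonneg_ae
      (ae_of_all _ fun x => Finset.prod_nonneg fun i _ => hnonneg _ _)
      (Finset.measurable_prod _ fun i _ => measurable_pi_apply_apply hmeas _ _).aestronglyMeasurable]
    exact congrArg _ (lintegral_congr fun x => ENNReal.ofReal_prod_of_nonneg fun i _ => hnonneg _ _)
  rw [ge_iff_le, hd', ht, ← ENNReal.toReal_pow]
  exact ENNReal.toReal_mono
    (ne_top_of_le_ne_top (ENNReal.pow_ne_top ENNReal.ofReal_ne_top) (pathHomDensity_le_pow hVC n))
    (pow_lintegral_lintegral_le_pathHomDensity hV (fun x y => by simp only [V, hsym x y])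
      ENNReal.ofReal_ne_top hVC n)

/-- Blakley–Roy inequality: for a bounded symmetric measurable `W : [0,1]² → ℝ≥0` with
`d = ∫∫ W`, the homomorphism density of the path `Pₙ` with `n` edges satisfies
`t(Pₙ, W) ≥ dⁿ` for every `n ≥ 1`. -/
theorem blakley_roy (W : I → I → ℝ)
    (hmeas : Measurable (Function.uncurry W))
    (hnonneg : ∀ x y, 0 ≤ W x y)
    (hbdd : ∃ C : ℝ, ∀ x y, W x y ≤ C)
    (hsym : ∀ x y, W x y = W y x)
    (d : ℝ) (hd : d = ∫ x : I, ∫ y : I, W x y)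
    (n : ℕ) (hn : 1 ≤ n) :
    (∫ x : Fin (n + 1) → I, ∏ i : Fin n, W (x i.castSucc) (x i.succ)) ≥ d ^ n :=
  blakley_roy_general W hmeas hnonneg hbdd hsym d hd n
end

section
/- Let T be a tree on vertex set {x₁,…,x_n} with vertex degrees r₁,…,r_n, W : [0,1]² → ℝ>0 bounded symmetric measurable, d = ∫∫ W, d(x) = ∫ W(x,y) dy. Define f_T = d^{-1} · ∏_{i=1}^n d(x_i)^{1−r_i} · ∏_{(x_i,x_j)∈E(T)} W(x_i,x_j). Then for every i, the marginal ∫ f_T ∏_{j≠i} dx_j equals d(x_i)/d, and consequently ∫ f_T = 1. -/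
/-!
Root the tree at `i` and let `p j` be the neighbour of `j ≠ i` closer to the root. The edges of
`T` are exactly the pairs `{j, p j}`, so the degree exponents telescope and
`f_T(x) = d(xᵢ)/d · ∏_{j ≠ i} K(x_{p j}, x_j)` with the Markov kernel
`K(u, v) = W(u, v)/d(u)`. Integrating out the non-root variables from the leaves inwards,
every factor integrates to `1`.
-/

open MeasureTheory Real unitInterval Finset Function

namespace SimpleGraph

variable {V : Type*} {G : SimpleGraph V}

def IsParentMap (G : SimpleGraph V) (i : V) (p : V → V) : Prop :=
  ∀ j ≠ i, G.Adj j (p j) ∧ G.dist (p j) i < G.dist j i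

theorem Connected.exists_isParentMap (hG : G.Connected) (i : V) : ∃ p, G.IsParentMap i p := by
  suffices ∀ j, ∃ w, j ≠ i → G.Adj j w ∧ G.dist w i < G.dist j i by
    choose p hp using this
    exact ⟨p, hp⟩
  intro j
  by_cases hji : j = i
  · exact ⟨j, fun h => (h hji).elim⟩
  obtain ⟨q, hq⟩ := hG.exists_walk_length_eq_dist j i
  cases q with
  | nil => exact (hji rfl).elim
  | cons hadj q =>
    refine ⟨_, fun _ => ⟨hadj, ?_⟩⟩
    have := dist_le q
    rw [Walk.length_cons] at hq
    omega

/-- `f_T`, with `D` in place of the degree function `d(x) = ∫ W(x, y) dy`. -/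
noncomputable def treeWeight [Fintype V] (G : SimpleGraph V) [DecidableRel G.Adj] {X : Type*}
    (W : X → X → ℝ) (hW : ∀ u v, W u v = W v u) (D : X → ℝ) (d : ℝ) (x : V → X) : ℝ :=
  d⁻¹ * (∏ v, D (x v) ^ ((1 : ℤ) - (G.degree v : ℤ))) *
    ∏ e ∈ G.edgeFinset, Sym2.lift ⟨fun a b => W (x a) (x b), fun a b => hW (x a) (x b)⟩ e

variable [Fintype V] [DecidableRel G.Adj]

section treeWeight

variable {X : Type*} {W : X → X → ℝ} (hW : ∀ u v, W u v = W v u) {D : X → ℝ} {d : ℝ}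

theorem treeWeight_nonneg (hW0 : 0 ≤ W) (hD0 : 0 ≤ D) (hd : 0 ≤ d) (x : V → X) :
    0 ≤ G.treeWeight W hW D d x := by
  refine mul_nonneg (mul_nonneg (inv_nonneg.2 hd)
    (prod_nonneg fun v _ => zpow_nonneg (hD0 _) _)) (prod_nonneg fun e _ => ?_)
  induction e using Sym2.ind with
  | _ a b => exact hW0 _ _

theorem measurable_treeWeight [MeasurableSpace X] (hWm : Measurable (uncurry W))
    (hDm : Measurable D) : Measurable (G.treeWeight W hW D d) := by
  have hedges : Measurable fun x : V → X => ∏ e ∈ G.edgeFinset,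
      Sym2.lift ⟨fun a b => W (x a) (x b), fun a b => hW (x a) (x b)⟩ e := by
    refine Finset.measurable_prod _ fun e _ => ?_
    induction e using Sym2.ind with
    | _ a b => exact hWm.comp (f := fun x : V → X => (x a, x b)) (by fun_prop)
  unfold treeWeight
  fun_prop

end treeWeight

variable [DecidableEq V] {M : Type*} [CommMonoid M]

theorem prod_pow_degree (g : V → M) :
    ∏ v, g v ^ G.degree v =
      ∏ e ∈ G.edgeFinset, Sym2.lift ⟨fun a b => g a * g b, fun _ _ => mul_comm _ _⟩ e := by
  calc ∏ v, g v ^ G.degree v = ∏ v, ∏ e ∈ G.edgeFinset with v ∈ e, g v := by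
        simp only [prod_const, ← incidenceFinset_eq_filter, card_incidenceFinset_eq_degree]
    _ = ∏ e ∈ G.edgeFinset, ∏ v with v ∈ e, g v := prod_comm' (by simp [and_comm])
    _ = _ := by
        refine prod_congr rfl fun e he => ?_
        induction e using Sym2.ind with
        | _ a b =>
          rw [Sym2.lift_mk, Subtype.coe_mk, ← prod_pair (G.ne_of_adj (mem_edgeFinset.mp he))]
          congr 1
          ext v
          simp

theorem IsTree.prod_edgeFinset_eq_prod_parent (hG : G.IsTree) {i : V} {p : V → V}
    (hp : G.IsParentMap i p) (f : Sym2 V → M) :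
    ∏ e ∈ G.edgeFinset, f e = ∏ j ∈ univ.erase i, f s(j, p j) := by
  have hinj : Set.InjOn (fun j => s(j, p j)) (univ.erase i : Finset V) := by
    intro a ha b hb hab
    rcases Sym2.eq_iff.mp hab with ⟨h, -⟩ | ⟨hap, hpa⟩
    · exact h
    · have ha' := (hp a (ne_of_mem_erase ha)).2
      have hb' := (hp b (ne_of_mem_erase hb)).2
      rw [hpa] at ha'
      rw [← hap] at hb'
      omega
  -- `j ↦ {j, p j}` is injective into the `n - 1` edges of the tree, hence onto them
  have himage : (univ.erase i).image (fun j => s(j, p j)) = G.edgeFinset := by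
    refine eq_of_subset_of_card_le (fun e he => ?_) ?_
    · obtain ⟨j, hj, rfl⟩ := mem_image.mp he
      exact mem_edgeFinset.mpr (hp j (ne_of_mem_erase hj)).1
    · have := hG.card_edgeFinset
      rw [card_image_of_injOn hinj, card_erase_of_mem (mem_univ i), card_univ]
      omega
  rw [← himage, prod_image hinj]

theorem IsTree.treeWeight_eq {X : Type*} (hG : G.IsTree) {i : V} {p : V → V}
    (hp : G.IsParentMap i p) {W : X → X → ℝ} (hW : ∀ u v, W u v = W v u) {D : X → ℝ}
    (hD : ∀ u, D u ≠ 0) (d : ℝ) (x : V → X) :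
    G.treeWeight W hW D d x =
      D (x i) / d * ∏ j ∈ univ.erase i, W (x (p j)) (x j) / D (x (p j)) := by
  have hvert : ∏ v, D (x v) ^ ((1 : ℤ) - (G.degree v : ℤ)) =
      D (x i) * (∏ j ∈ univ.erase i, D (x j)) /
        ∏ j ∈ univ.erase i, (D (x j) * D (x (p j))) := by
    simp_rw [zpow_sub₀ (hD _), zpow_one, zpow_natCast, prod_div_distrib]
    rw [prod_pow_degree fun v => D (x v), hG.prod_edgeFinset_eq_prod_parent hp,
      mul_prod_erase _ (fun v => D (x v)) (mem_univ i)]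
    rfl
  have hedge : ∏ e ∈ G.edgeFinset,
      Sym2.lift ⟨fun a b => W (x a) (x b), fun a b => hW (x a) (x b)⟩ e =
        ∏ j ∈ univ.erase i, W (x (p j)) (x j) := by
    rw [hG.prod_edgeFinset_eq_prod_parent hp]
    exact prod_congr rfl fun j _ => hW _ _
  have hne : ∏ j ∈ univ.erase i, D (x j) ≠ 0 := prod_ne_zero_iff.mpr fun j _ => hD _
  rw [treeWeight, hvert, hedge, prod_div_distrib, prod_mul_distrib]
  field_simp

end SimpleGraph

namespace MeasureTheory

open scoped ENNReal

section Integrals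

variable {α : Type*} [MeasurableSpace α] {μ : Measure α} {f : α → ℝ}

theorem integrable_of_nonneg_of_le [IsFiniteMeasure μ] (hf : AEStronglyMeasurable f μ)
    (hf0 : 0 ≤ f) {C : ℝ} (hC : ∀ x, f x ≤ C) : Integrable f μ :=
  .of_bound hf C (ae_of_all _ fun x => (norm_of_nonneg (hf0 x)).trans_le (hC x))

theorem le_integral_of_forall_le [IsProbabilityMeasure μ] (hf : Integrable f μ) {c : ℝ}
    (hc : ∀ x, c ≤ f x) : c ≤ ∫ x, f x ∂μ := by
  simpa using integral_mono (integrable_const c) hf hc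

theorem lintegral_ofReal_div_integral_self (hf : Integrable f μ) (hf0 : 0 ≤ f)
    (hpos : 0 < ∫ x, f x ∂μ) : ∫⁻ x, ENNReal.ofReal (f x / ∫ x, f x ∂μ) ∂μ = 1 := by
  rw [← ofReal_integral_eq_lintegral_ofReal (hf.div_const _)
    (ae_of_all _ fun x => div_nonneg (hf0 x) hpos.le), integral_div, div_self hpos.ne',
    ENNReal.ofReal_one]

end Integrals

section Marginals

variable {ι : Type*} [DecidableEq ι]

theorem lmarginal_mul_prod_kernel {X : Type*} [MeasurableSpace X] {μ : Measure X}
    [SigmaFinite μ] {K : X → X → ℝ≥0∞} (hK : Measurable (uncurry K))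
    (hK1 : ∀ u, ∫⁻ v, K u v ∂μ = 1) {p : ι → ι} {ρ : ι → ℕ} (s : Finset ι)
    (hρ : ∀ j ∈ s, ρ (p j) < ρ j) {h : (ι → X) → ℝ≥0∞} (hh : Measurable h)
    (hh_congr : ∀ x y, (∀ k ∉ s, x k = y k) → h x = h y) (x : ι → X) :
    (∫⋯∫⁻_s, (fun z => h z * ∏ j ∈ s, K (z (p j)) (z j)) ∂fun _ => μ) x = h x := by
  have hKm (a b : ι) : Measurable fun z : ι → X => K (z a) (z b) :=
    hK.comp (f := fun z : ι → X => (z a, z b)) (by fun_prop)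
  induction s using Finset.strongInduction generalizing h x with
  | _ s ih =>
  rcases s.eq_empty_or_nonempty with rfl | hne
  · simp
  -- the vertex `j` of least rank is integrated last, against the fixed variable `x (p j)`
  obtain ⟨j, hj, hj_min⟩ := exists_min_image s ρ hne
  have hpj : p j ∉ s := fun h => (hρ j hj).not_ge (hj_min _ h)
  have hpjj : p j ≠ j := (ne_of_mem_of_not_mem hj hpj).symm
  have hinner (y : ι → X) :
      (∫⋯∫⁻_(s.erase j), (fun z => h z * ∏ k ∈ s, K (z (p k)) (z k)) ∂fun _ => μ) y =
        h y * K (y (p j)) (y j) := by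
    simp_rw [← mul_prod_erase s _ hj, ← mul_assoc]
    refine ih _ (erase_ssubset hj) (fun k hk => hρ k (mem_of_mem_erase hk))
      (hh.mul (hKm _ _)) (fun a b hab => ?_) y
    change h a * K (a (p j)) (a j) = h b * K (b (p j)) (b j)
    rw [hh_congr a b fun k hk => hab k fun hk' => hk (mem_of_mem_erase hk'),
      hab (p j) fun h => hpj (mem_of_mem_erase h), hab j (notMem_erase j s)]
  have hf : Measurable fun z : ι → X => h z * ∏ k ∈ s, K (z (p k)) (z k) :=
    hh.mul (Finset.measurable_prod _ fun k _ => hKm _ _)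
  have hKx : Measurable (K (x (p j))) := hK.comp measurable_prodMk_left
  calc _ = ∫⁻ t, h (update x j t) * K (update x j t (p j)) (update x j t j) ∂μ := by
        simp_rw [lmarginal_erase _ hf hj, hinner]
    _ = ∫⁻ t, h x * K (x (p j)) t ∂μ := by
        refine lintegral_congr fun t => ?_
        rw [update_self, update_of_ne hpjj,
          hh_congr _ x fun k hk => update_of_ne (ne_of_mem_of_not_mem hj hk).symm _ _]
    _ = h x := by rw [lintegral_const_mul _ hKx, hK1, mul_one]

variable [Fintype ι] {X : ι → Type*} [∀ j, MeasurableSpace (X j)] [∀ j, Nonempty (X j)]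
  {μ : ∀ j, Measure (X j)} {i : ι}

theorem lintegral_pi_eq_of_lmarginal_erase [∀ j, SigmaFinite (μ j)]
    {f : (∀ j, X j) → ℝ≥0∞} (hf : Measurable f) {g : X i → ℝ≥0∞}
    (h : ∀ x, (∫⋯∫⁻_(univ.erase i), f ∂μ) x = g (x i)) :
    ∫⁻ x, f x ∂Measure.pi μ = ∫⁻ t, g t ∂μ i := by
  rw [lintegral_eq_lmarginal_univ fun _ => Classical.arbitrary _, ← insert_erase (mem_univ i),
    lmarginal_insert _ hf (notMem_erase i univ)]
  simp_rw [h, update_self]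

variable {f : (∀ j, X j) → ℝ}

theorem integral_pi_eq_of_lmarginal_erase [∀ j, SigmaFinite (μ j)] (hf : Measurable f)
    (hf0 : 0 ≤ f) (g : X i → ℝ) (hg : Integrable g (μ i)) (hg0 : 0 ≤ g)
    (h : ∀ x, (∫⋯∫⁻_(univ.erase i), (fun z => ENNReal.ofReal (f z)) ∂μ) x =
      ENNReal.ofReal (g (x i))) :
    ∫ x, f x ∂Measure.pi μ = ∫ t, g t ∂μ i := by
  rw [integral_eq_lintegral_of_nonneg_ae (ae_of_all _ hf0) hf.aestronglyMeasurable,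
    lintegral_pi_eq_of_lmarginal_erase (g := fun t => ENNReal.ofReal (g t)) hf.ennreal_ofReal h,
    ← ofReal_integral_eq_lintegral_ofReal hg (ae_of_all _ hg0),
    ENNReal.toReal_ofReal (integral_nonneg hg0)]

theorem integral_update_eq_of_lmarginal_erase [∀ j, IsProbabilityMeasure (μ j)]
    (hf : Measurable f) (hf0 : 0 ≤ f) (g : X i → ℝ)
    (h : ∀ x, (∫⋯∫⁻_(univ.erase i), (fun z => ENNReal.ofReal (f z)) ∂μ) x =
      ENNReal.ofReal (g (x i))) (t : X i) (hgt : 0 ≤ g t) :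
    ∫ x, f (update x i t) ∂Measure.pi μ = g t := by
  have hconst (x : ∀ j, X j) : (∫⋯∫⁻_(univ.erase i),
      (fun z => ENNReal.ofReal (f (update z i t))) ∂μ) x = ENNReal.ofReal (g t) := by
    have := h (update x i t)
    rw [update_self, lmarginal_update_of_notMem hf.ennreal_ofReal (notMem_erase i univ)] at this
    exact this
  simpa using integral_pi_eq_of_lmarginal_erase (hf.comp measurable_update_left)
    (fun x => hf0 (update x i t)) (fun _ => g t) (integrable_const (g t)) (fun _ => hgt) hconst

end Marginals

end MeasureTheory

theorem SimpleGraph.IsTree.lmarginal_treeWeight {V : Type*} [Fintype V] [DecidableEq V]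
    {T : SimpleGraph V} [DecidableRel T.Adj] (hT : T.IsTree) {X : Type*} [MeasurableSpace X]
    {μ : Measure X} [SigmaFinite μ] {W : X → X → ℝ} (hWm : Measurable (uncurry W))
    (hW0 : 0 ≤ W) (hWint : ∀ u, Integrable (W u) μ) (hW : ∀ u v, W u v = W v u)
    {D : X → ℝ} (hD : ∀ u, D u = ∫ v, W u v ∂μ) (hD0 : ∀ u, 0 < D u) (d : ℝ) (i : V)
    (x : V → X) :
    (∫⋯∫⁻_(univ.erase i), (fun z => ENNReal.ofReal (T.treeWeight W hW D d z)) ∂fun _ => μ) x =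
      ENNReal.ofReal (D (x i) / d) := by
  obtain ⟨p, hp⟩ := hT.connected.exists_isParentMap i
  have hDm : Measurable D :=
    funext hD ▸ hWm.stronglyMeasurable.integral_prod_right.measurable
  have hK : Measurable (uncurry fun u v => ENNReal.ofReal (W u v / D u)) :=
    ENNReal.measurable_ofReal.comp (hWm.div (hDm.comp measurable_fst))
  have hK1 (u : X) : ∫⁻ v, ENNReal.ofReal (W u v / D u) ∂μ = 1 := by
    rw [hD u]
    exact lintegral_ofReal_div_integral_self (hWint u) (hW0 u) (hD u ▸ hD0 u)
  have hK0 (u v : X) : 0 ≤ W u v / D u := div_nonneg (hW0 u v) (hD0 u).le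
  have hfac (z : V → X) : ENNReal.ofReal (T.treeWeight W hW D d z) =
      ENNReal.ofReal (D (z i) / d) *
        ∏ j ∈ univ.erase i, ENNReal.ofReal (W (z (p j)) (z j) / D (z (p j))) := by
    rw [hT.treeWeight_eq hp hW (fun u => (hD0 u).ne'), ENNReal.ofReal_mul'
      (prod_nonneg fun j _ => hK0 _ _), ENNReal.ofReal_prod_of_nonneg fun j _ => hK0 _ _]
  simp_rw [hfac]
  exact lmarginal_mul_prod_kernel hK hK1 (ρ := (T.dist · i)) _
    (fun j hj => (hp j (ne_of_mem_erase hj)).2) (h := fun z => ENNReal.ofReal (D (z i) / d))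
    (by fun_prop) (fun y z hyz => by rw [hyz i (notMem_erase i _)]) x

open scoped Classical in
theorem tree_weight_general (n : ℕ) (T : SimpleGraph (Fin n)) (htree : T.IsTree)
    (W : I → I → ℝ)
    (hmeas : Measurable (Function.uncurry W))
    (hpos : ∃ c : ℝ, 0 < c ∧ ∀ x y, c ≤ W x y)
    (hbdd : ∃ C : ℝ, ∀ x y, W x y ≤ C)
    (hsym : ∀ x y, W x y = W y x)
    (d : ℝ) (hd : d = ∫ x : I, ∫ y : I, W x y)
    (deg : I → ℝ) (hdeg : ∀ x, deg x = ∫ y : I, W x y)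
    (fT : (Fin n → I) → ℝ)
    (hfT : ∀ x, fT x = d⁻¹ * (∏ i : Fin n, deg (x i) ^ ((1 : ℤ) - (T.degree i : ℤ))) *
      ∏ e ∈ T.edgeFinset,
        Sym2.lift ⟨fun a b => W (x a) (x b), fun a b => hsym (x a) (x b)⟩ e) :
    (∀ (i : Fin n) (xi : I),
        (∫ x : Fin n → I, fT (Function.update x i xi)) = deg xi / d) ∧
      (∫ x : Fin n → I, fT x) = 1 := by
  obtain ⟨c, hc, hcW⟩ := hpos
  obtain ⟨C, hWC⟩ := hbdd
  have hW0 : 0 ≤ W := fun u v => hc.le.trans (hcW u v)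
  have hWint (u : I) : Integrable (W u) := integrable_of_nonneg_of_le
    (hmeas.comp measurable_prodMk_left).aestronglyMeasurable (hW0 u) (hWC u)
  have hdeg_int : Integrable deg := funext hdeg ▸ (integrable_of_nonneg_of_le
    hmeas.aestronglyMeasurable (fun q => hW0 q.1 q.2) fun q => hWC q.1 q.2).integral_prod_left
  have hdeg_meas : Measurable deg :=
    funext hdeg ▸ hmeas.stronglyMeasurable.integral_prod_right.measurable
  have hc_deg (u : I) : c ≤ deg u := hdeg u ▸ le_integral_of_forall_le (hWint u) (hcW u)
  have hdeg_pos (u : I) : 0 < deg u := hc.trans_le (hc_deg u)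
  have hd_eq : d = ∫ u, deg u := by simp_rw [hd, hdeg]
  have hd_pos : 0 < d := hc.trans_le (hd_eq ▸ le_integral_of_forall_le hdeg_int hc_deg)
  obtain rfl : fT = T.treeWeight W hsym deg d := funext hfT
  have hmarg := htree.lmarginal_treeWeight (μ := volume) hmeas hW0 hWint hsym hdeg hdeg_pos d
  have hf_meas := SimpleGraph.measurable_treeWeight (G := T) hsym hmeas hdeg_meas (d := d)
  have hf0 := SimpleGraph.treeWeight_nonneg (G := T) hsym hW0 (fun u => (hdeg_pos u).le)
    hd_pos.le
  have hg0 (u : I) : 0 ≤ deg u / d := div_nonneg (hdeg_pos u).le hd_pos.le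
  refine ⟨fun i xi =>
    integral_update_eq_of_lmarginal_erase hf_meas hf0 (deg · / d) (hmarg i) xi (hg0 xi), ?_⟩
  obtain ⟨i⟩ := htree.connected.nonempty
  rw [volume_pi, integral_pi_eq_of_lmarginal_erase hf_meas hf0 (deg · / d)
      (hdeg_int.div_const d) hg0 (hmarg i),
    integral_div, ← hd_eq, div_self hd_pos.ne']

open scoped Classical in
/-- The canonical tree weight of the logarithmic calculus: for a tree `T` on `{x₁,…,x_n}`
with degrees `rᵢ`, and `W : [0,1]² → ℝ` bounded, symmetric, measurable and bounded below by
a positive constant, with `d = ∫∫ W` and `d(x) = ∫ W(x,y) dy`, the weight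
`f_T = d⁻¹ ∏ᵢ d(xᵢ)^{1 - rᵢ} ∏_{(xᵢ,xⱼ) ∈ E(T)} W(xᵢ,xⱼ)` has all its one-variable
marginals equal to `d(xᵢ)/d`, and consequently `∫ f_T = 1`. -/
theorem tree_weight (n : ℕ) (hn : 1 ≤ n) (T : SimpleGraph (Fin n)) (htree : T.IsTree)
    (W : I → I → ℝ)
    (hmeas : Measurable (Function.uncurry W))
    (hpos : ∃ c : ℝ, 0 < c ∧ ∀ x y, c ≤ W x y)
    (hbdd : ∃ C : ℝ, ∀ x y, W x y ≤ C)
    (hsym : ∀ x y, W x y = W y x)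
    (d : ℝ) (hd : d = ∫ x : I, ∫ y : I, W x y)
    (deg : I → ℝ) (hdeg : ∀ x, deg x = ∫ y : I, W x y)
    (fT : (Fin n → I) → ℝ)
    (hfT : ∀ x, fT x = d⁻¹ * (∏ i : Fin n, deg (x i) ^ ((1 : ℤ) - (T.degree i : ℤ))) *
      ∏ e ∈ T.edgeFinset,
        Sym2.lift ⟨fun a b => W (x a) (x b), fun a b => hsym (x a) (x b)⟩ e) :
    (∀ (i : Fin n) (xi : I),
        (∫ x : Fin n → I, fT (Function.update x i xi)) = deg xi / d) ∧
      (∫ x : Fin n → I, fT x) = 1 :=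
  tree_weight_general n T htree W hmeas hpos hbdd hsym d hd deg hdeg fT hfT
end

section
/- Let H be a bipartite graph containing an edge (x₁,x₂), labeled by {1,2}, and suppose this edge is smooth in H, i.e., E(W(x₁,x₂) d^{-1} ln t_{{x₁,x₂}}(H*, W)) ≥ |E(H*)| ln d for all strictly positive bounded symmetric W, where H* = H minus the edge (x₁,x₂). Then H is Sidorenko: t(H, W) ≥ d^{|E(H)|}. -/
open MeasureTheory Real unitInterval

noncomputable section
open scoped Classical

/-- The product of `W` over the edges of a graph, evaluated at a vertex-assignment `x`;
`W` is assumed symmetric via `hsym`. -/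
def edgeProd {k : ℕ} (G : SimpleGraph (Fin k)) (W : I → I → ℝ)
    (hsym : ∀ x y, W x y = W y x) (x : Fin k → I) : ℝ :=
  ∏ e ∈ G.edgeFinset,
    Sym2.lift ⟨fun a b => W (x a) (x b), fun a b => hsym (x a) (x b)⟩ e

/-- `d = ∫∫ W`, the edge density of the kernel `W`. -/
def kernelDensity (W : I → I → ℝ) : ℝ := ∫ x : I, ∫ y : I, W x y

/-- The degree function `d(x) = ∫ W(x,y) dy`. -/
def kernelDeg (W : I → I → ℝ) (x : I) : ℝ := ∫ y : I, W x y

/-- The canonical tree weight `f_T = d⁻¹ ∏ᵢ d(xᵢ)^{1-rᵢ} ∏_{(xᵢ,xⱼ)∈E(T)} W(xᵢ,xⱼ)`. -/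
def treeWeight {n : ℕ} (T : SimpleGraph (Fin n)) (W : I → I → ℝ)
    (hsym : ∀ x y, W x y = W y x) (x : Fin n → I) : ℝ :=
  (kernelDensity W)⁻¹ * (∏ i : Fin n, kernelDeg W (x i) ^ ((1 : ℤ) - (T.degree i : ℤ))) *
    edgeProd T W hsym x

/-- Extend an assignment `y` of the first `n` (labeled) vertices by `x` on the rest. -/
def extAssign {m n : ℕ} (hnm : n ≤ m) (y : Fin n → I) (x : Fin m → I) : Fin m → I :=
  fun i => if h : (i : ℕ) < n then y ⟨i, h⟩ else x i

/-- The restricted density `t_S(G, W)` of a graph `G` on `Fin m`, with the first `n`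
vertices (the labeled set `S`) fixed to `y`. -/
def restrictedDensity {m n : ℕ} (hnm : n ≤ m) (G : SimpleGraph (Fin m)) (W : I → I → ℝ)
    (hsym : ∀ x y, W x y = W y x) (y : Fin n → I) : ℝ :=
  ∫ x : Fin m → I, edgeProd G W hsym (extAssign hnm y x)

/-- `H*`: the graph `H` with the edges of the tree `T` (spanned on the first `n` vertices)
deleted. -/
def deleteTreeEdges {m n : ℕ} (hnm : n ≤ m) (H : SimpleGraph (Fin m))
    (T : SimpleGraph (Fin n)) : SimpleGraph (Fin m) :=
  H.deleteEdges (Sym2.map (Fin.castLE hnm) '' T.edgeSet)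

/-- The tree `T`, spanned on the first `n` (labeled) vertices of `H`, is *smooth* in `H`:
for every strictly positive bounded symmetric measurable `W`,
`E(f_T · ln t_S(H*, W)) ≥ |E(H*)| ln d`. -/
def IsSmooth {m n : ℕ} (hnm : n ≤ m) (H : SimpleGraph (Fin m))
    (T : SimpleGraph (Fin n)) : Prop :=
  ∀ (W : I → I → ℝ), Measurable (Function.uncurry W) →
    (∃ c : ℝ, 0 < c ∧ ∀ x y, c ≤ W x y) → (∃ C : ℝ, ∀ x y, W x y ≤ C) →
    ∀ (hsym : ∀ x y, W x y = W y x),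
    (∫ y : Fin n → I, treeWeight T W hsym y *
        Real.log (restrictedDensity hnm (deleteTreeEdges hnm H T) W hsym y))
      ≥ ((deleteTreeEdges hnm H T).edgeFinset.card : ℝ) * Real.log (kernelDensity W)

/-! Split off the edge: `t(H, W) = ∫ W(y₀, y₁) F(y) dy`, where `F = t_{{x₁,x₂}}(H*, W)`.
With the probability density `W(y₀, y₁) / d`, which is the tree weight of a single edge,
Jensen's inequality for `log` and smoothness give
`|E(H*)| log d ≤ E[(W / d) log F] ≤ log E[(W / d) F] = log (t(H, W) / d)`,
and `|E(H)| = |E(H*)| + 1`. -/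

open Set

section BoundedIntegral

variable {α : Type*} [MeasurableSpace α] {μ : Measure α} {f : α → ℝ} {a b : ℝ}

lemma integrable_of_forall_mem_Icc [IsFiniteMeasure μ] (hf : AEStronglyMeasurable f μ)
    (hab : ∀ x, f x ∈ Icc a b) : Integrable f μ :=
  .of_bound hf (max |a| |b|) (ae_of_all _ fun x => abs_le_max_abs_abs (hab x).1 (hab x).2)

lemma integral_mem_Icc_of_forall_mem_Icc [IsProbabilityMeasure μ] (hf : AEStronglyMeasurable f μ)
    (hab : ∀ x, f x ∈ Icc a b) : ∫ x, f x ∂μ ∈ Icc a b := by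
  have hint := integrable_of_forall_mem_Icc hf hab
  constructor
  · simpa using integral_mono (integrable_const a) hint fun x => (hab x).1
  · simpa using integral_mono hint (integrable_const b) fun x => (hab x).2

/-- Integrate the tangent-line bound `log F ≤ log M + F / M - 1` at `M = ∫ ρ F`. -/
theorem integral_mul_log_le_log_integral_mul {ρ F : α → ℝ} (hρ : ∀ x, 0 ≤ ρ x)
    (hρ_one : ∫ x, ρ x ∂μ = 1) (hF : ∀ x, 0 < F x)
    (hρF : Integrable (fun x => ρ x * F x) μ)
    (hρ_logF : Integrable (fun x => ρ x * log (F x)) μ) :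
    ∫ x, ρ x * log (F x) ∂μ ≤ log (∫ x, ρ x * F x ∂μ) := by
  set M := ∫ x, ρ x * F x ∂μ
  have hρ_int : Integrable ρ μ := .of_integral_ne_zero (by simp [hρ_one])
  have hM : 0 < M := by
    refine (integral_nonneg fun x => mul_nonneg (hρ x) (hF x).le).lt_of_ne fun h => ?_
    have hρF_zero := (integral_eq_zero_iff_of_nonneg
      (fun x => mul_nonneg (hρ x) (hF x).le) hρF).1 h.symm
    have hρ_zero : ρ =ᵐ[μ] 0 :=
      hρF_zero.mono fun x hx => by simpa [(hF x).ne'] using hx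
    simp [integral_congr_ae hρ_zero] at hρ_one
  have htangent : ∀ x, ρ x * log (F x) ≤ (log M - 1) * ρ x + M⁻¹ * (ρ x * F x) := by
    intro x
    have h := log_le_sub_one_of_pos (div_pos (hF x) hM)
    rw [log_div (hF x).ne' hM.ne'] at h
    have := mul_le_mul_of_nonneg_left h (hρ x)
    rw [div_eq_inv_mul] at this
    linarith
  calc ∫ x, ρ x * log (F x) ∂μ
      ≤ ∫ x, ((log M - 1) * ρ x + M⁻¹ * (ρ x * F x)) ∂μ :=
        integral_mono hρ_logF ((hρ_int.const_mul _).add (hρF.const_mul _)) htangent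
    _ = log M := by
        rw [integral_add (hρ_int.const_mul _) (hρF.const_mul _), integral_const_mul,
          integral_const_mul, hρ_one, inv_mul_cancel₀ hM.ne']
        ring

theorem integral_mul_log_le_log_integral_mul_of_mem_Icc {ρ F : α → ℝ}
    (hρ : ∀ x, 0 ≤ ρ x) (hρ_one : ∫ x, ρ x ∂μ = 1) (hF_meas : AEStronglyMeasurable F μ)
    (ha : 0 < a) (hF : ∀ x, F x ∈ Icc a b) :
    ∫ x, ρ x * log (F x) ∂μ ≤ log (∫ x, ρ x * F x ∂μ) := by
  have hρ_int : Integrable ρ μ := .of_integral_ne_zero (by simp [hρ_one])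
  have hF_pos : ∀ x, 0 < F x := fun x => ha.trans_le (hF x).1
  exact integral_mul_log_le_log_integral_mul hρ hρ_one hF_pos
    (hρ_int.mul_bdd hF_meas (ae_of_all _ fun x => abs_le_max_abs_abs (hF x).1 (hF x).2))
    (hρ_int.mul_bdd (measurable_log.comp_aemeasurable hF_meas.aemeasurable).aestronglyMeasurable
      (ae_of_all _ fun x => abs_le_max_abs_abs (log_le_log ha (hF x).1)
        (log_le_log (hF_pos x) (hF x).2)))

end BoundedIntegral

section EdgeProd

variable {W : I → I → ℝ} (hsym : ∀ x y, W x y = W y x)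

lemma measurable_edgeProd {k : ℕ} (G : SimpleGraph (Fin k))
    (hW : Measurable (Function.uncurry W)) : Measurable (edgeProd G W hsym) := by
  refine Finset.measurable_prod _ fun e _ => ?_
  induction e using Sym2.ind with
  | _ i j =>
    simp only [Sym2.lift_mk]
    exact hW.comp (by fun_prop : Measurable fun x : Fin k → I => (x i, x j))

lemma edgeProd_mem_Icc {k : ℕ} (G : SimpleGraph (Fin k)) {c C : ℝ} (hc : 0 ≤ c)
    (hWc : ∀ x y, W x y ∈ Icc c C) (x : Fin k → I) :
    edgeProd G W hsym x ∈ Icc (c ^ G.edgeFinset.card) (C ^ G.edgeFinset.card) := by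
  have hedge : ∀ e : Sym2 (Fin k),
      Sym2.lift ⟨fun a b => W (x a) (x b), fun a b => hsym (x a) (x b)⟩ e ∈ Icc c C := by
    intro e
    induction e using Sym2.ind with
    | _ i j => exact hWc _ _
  rw [← Finset.prod_const, ← Finset.prod_const]
  exact ⟨Finset.prod_le_prod (fun _ _ => hc) fun e _ => (hedge e).1,
    Finset.prod_le_prod (fun e _ => hc.trans (hedge e).1) fun e _ => (hedge e).2⟩

lemma integrable_edgeProd {k : ℕ} (G : SimpleGraph (Fin k))
    (hW : Measurable (Function.uncurry W)) {c C : ℝ} (hc : 0 ≤ c)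
    (hWc : ∀ x y, W x y ∈ Icc c C) : Integrable (edgeProd G W hsym) :=
  integrable_of_forall_mem_Icc (measurable_edgeProd hsym G hW).aestronglyMeasurable
    (edgeProd_mem_Icc hsym G hc hWc)

lemma edgeFinset_deleteEdges_singleton {V : Type*} [DecidableEq V] {G : SimpleGraph V} {a b : V}
    {_ : Fintype G.edgeSet} {_ : Fintype (G.deleteEdges {s(a, b)}).edgeSet} :
    (G.deleteEdges {s(a, b)}).edgeFinset = G.edgeFinset.erase s(a, b) := by
  ext e
  simp [SimpleGraph.edgeSet_deleteEdges, and_comm]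

lemma edgeProd_eq_mul_edgeProd_deleteEdges {k : ℕ} {G : SimpleGraph (Fin k)} {a b : Fin k}
    (hab : G.Adj a b) (x : Fin k → I) :
    edgeProd G W hsym x = W (x a) (x b) * edgeProd (G.deleteEdges {s(a, b)}) W hsym x := by
  rw [edgeProd, edgeProd, edgeFinset_deleteEdges_singleton,
    ← Finset.mul_prod_erase _ _ (G.mem_edgeFinset.2 (G.mem_edgeSet.2 hab)), Sym2.lift_mk]

lemma card_edgeFinset_deleteEdges_add_one {V : Type*} {G : SimpleGraph V} {a b : V}
    {_ : Fintype G.edgeSet} {_ : Fintype (G.deleteEdges {s(a, b)}).edgeSet} (hab : G.Adj a b) :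
    (G.deleteEdges {s(a, b)}).edgeFinset.card + 1 = G.edgeFinset.card := by
  rw [edgeFinset_deleteEdges_singleton,
    Finset.card_erase_add_one (G.mem_edgeFinset.2 (G.mem_edgeSet.2 hab))]

end EdgeProd

section Labeled

variable {m n : ℕ} (hnm : n ≤ m) {W : I → I → ℝ} (hsym : ∀ x y, W x y = W y x)

/-- `extAssign` is `piEquivPiSubtypeProd.symm` applied to `y` reindexed along `Fin.castLEquiv`
and to the coordinates of `x` outside the labeled set. -/
theorem measurePreserving_extAssign :
    MeasurePreserving (fun p : (Fin n → I) × (Fin m → I) => extAssign hnm p.1 p.2) := by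
  let e := MeasurableEquiv.piEquivPiSubtypeProd (fun _ : Fin m => I) (fun i => (i : ℕ) < n)
  have he := volume_preserving_piEquivPiSubtypeProd (fun _ : Fin m => I) (fun i => (i : ℕ) < n)
  have hlabeled := volume_preserving_arrowCongr' (Fin.castLEquiv hnm) (MeasurableEquiv.refl I)
    (MeasurePreserving.id volume)
  have hfree := (measurePreserving_snd (μ := volume) (ν := volume)).comp he
  exact (he.symm e).comp (hlabeled.prod hfree)

@[simp]
lemma extAssign_castLE (y : Fin n → I) (x : Fin m → I) (i : Fin n) :
    extAssign hnm y x (Fin.castLE hnm i) = y i := by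
  simp [extAssign]

lemma integral_eq_integral_integral_extAssign {g : (Fin m → I) → ℝ} (hg : Integrable g) :
    ∫ x, g x = ∫ y : Fin n → I, ∫ x : Fin m → I, g (extAssign hnm y x) := by
  have hext := measurePreserving_extAssign hnm
  calc ∫ x, g x
      = ∫ p : (Fin n → I) × (Fin m → I), g (extAssign hnm p.1 p.2) := by
        rw [← integral_map hext.measurable.aemeasurable
          (hext.map_eq ▸ hg.aestronglyMeasurable), hext.map_eq]
    _ = ∫ y : Fin n → I, ∫ x : Fin m → I, g (extAssign hnm y x) := by
        rw [Measure.volume_eq_prod]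
        exact integral_prod _ (hext.integrable_comp_of_integrable hg)

lemma measurable_restrictedDensity (G : SimpleGraph (Fin m))
    (hW : Measurable (Function.uncurry W)) : Measurable (restrictedDensity hnm G W hsym) :=
  ((measurable_edgeProd hsym G hW).comp
    (measurePreserving_extAssign hnm).measurable).stronglyMeasurable.integral_prod_right'.measurable

lemma restrictedDensity_mem_Icc (G : SimpleGraph (Fin m)) (hW : Measurable (Function.uncurry W))
    {c C : ℝ} (hc : 0 ≤ c) (hWc : ∀ x y, W x y ∈ Icc c C) (y : Fin n → I) :
    restrictedDensity hnm G W hsym y ∈ Icc (c ^ G.edgeFinset.card) (C ^ G.edgeFinset.card) :=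
  have hmeas := (measurable_edgeProd hsym G hW).comp
    ((measurePreserving_extAssign hnm).measurable.comp (measurable_prodMk_left (x := y)))
  integral_mem_Icc_of_forall_mem_Icc hmeas.aestronglyMeasurable
    fun _ => edgeProd_mem_Icc hsym G hc hWc _

theorem integral_edgeProd_eq_integral_mul_restrictedDensity {H : SimpleGraph (Fin m)}
    {a b : Fin n} (hab : H.Adj (Fin.castLE hnm a) (Fin.castLE hnm b))
    (hint : Integrable (edgeProd H W hsym)) :
    ∫ x, edgeProd H W hsym x = ∫ y : Fin n → I, W (y a) (y b) *
      restrictedDensity hnm (H.deleteEdges {s(Fin.castLE hnm a, Fin.castLE hnm b)}) W hsym y := by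
  rw [integral_eq_integral_integral_extAssign hnm hint]
  congr 1 with y
  simp_rw [edgeProd_eq_mul_edgeProd_deleteEdges hsym hab, extAssign_castLE]
  exact integral_const_mul _ _

end Labeled

section SingleEdge

variable {W : I → I → ℝ} (hsym : ∀ x y, W x y = W y x)

lemma edgeSet_top_fin_two : (⊤ : SimpleGraph (Fin 2)).edgeSet = {s(0, 1)} := by
  ext e
  induction e using Sym2.ind with
  | _ i j => fin_cases i <;> fin_cases j <;> simp

lemma deleteTreeEdges_top_fin_two {m : ℕ} (h2m : 2 ≤ m) (H : SimpleGraph (Fin m)) :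
    deleteTreeEdges h2m H ⊤ = H.deleteEdges {s(Fin.castLE h2m 0, Fin.castLE h2m 1)} := by
  rw [deleteTreeEdges, edgeSet_top_fin_two, Set.image_singleton, Sym2.map_mk]

lemma edgeFinset_top_fin_two {_ : Fintype (⊤ : SimpleGraph (Fin 2)).edgeSet} :
    (⊤ : SimpleGraph (Fin 2)).edgeFinset = {s(0, 1)} := by
  ext e
  rw [SimpleGraph.mem_edgeFinset, edgeSet_top_fin_two, Finset.mem_singleton,
    Set.mem_singleton_iff]

lemma degree_top_fin_two (i : Fin 2) {_ : Fintype ((⊤ : SimpleGraph (Fin 2)).neighborSet i)} :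
    (⊤ : SimpleGraph (Fin 2)).degree i = 1 := by
  convert SimpleGraph.complete_graph_degree i
  rfl

lemma treeWeight_top_fin_two (y : Fin 2 → I) :
    treeWeight ⊤ W hsym y = (kernelDensity W)⁻¹ * W (y 0) (y 1) := by
  simp [treeWeight, edgeProd, edgeFinset_top_fin_two, degree_top_fin_two]

lemma integral_apply_zero_one_eq_kernelDensity (hW : Integrable (Function.uncurry W)) :
    ∫ y : Fin 2 → I, W (y 0) (y 1) = kernelDensity W := by
  rw [Measure.volume_eq_prod] at hW
  calc ∫ y : Fin 2 → I, W (y 0) (y 1)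
      = ∫ p : I × I, Function.uncurry W p :=
        (volume_preserving_piFinTwo fun _ => I).integral_comp
          (MeasurableEquiv.measurableEmbedding _) (Function.uncurry W)
    _ = kernelDensity W := by rw [Measure.volume_eq_prod]; exact integral_prod _ hW

lemma kernelDensity_mem_Icc {c C : ℝ} (hW : Measurable (Function.uncurry W))
    (hWc : ∀ x y, W x y ∈ Icc c C) : kernelDensity W ∈ Icc c C := by
  rw [← integral_apply_zero_one_eq_kernelDensity
    (integrable_of_forall_mem_Icc hW.aestronglyMeasurable fun p => hWc p.1 p.2)]
  exact integral_mem_Icc_of_forall_mem_Icc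
    (hW.comp (by fun_prop : Measurable fun y : Fin 2 → I => (y 0, y 1))).aestronglyMeasurable
    fun _ => hWc _ _

lemma integral_treeWeight_top_fin_two {c C : ℝ} (hc : 0 < c)
    (hW : Measurable (Function.uncurry W)) (hWc : ∀ x y, W x y ∈ Icc c C) :
    ∫ y : Fin 2 → I, treeWeight ⊤ W hsym y = 1 := by
  simp_rw [treeWeight_top_fin_two]
  rw [integral_const_mul, integral_apply_zero_one_eq_kernelDensity
      (integrable_of_forall_mem_Icc hW.aestronglyMeasurable fun p => hWc p.1 p.2),
    inv_mul_cancel₀ (hc.trans_le (kernelDensity_mem_Icc hW hWc).1).ne']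

theorem integral_treeWeight_mul_log_restrictedDensity_le {m : ℕ} (h2m : 2 ≤ m)
    {H : SimpleGraph (Fin m)} (hedge : H.Adj (Fin.castLE h2m 0) (Fin.castLE h2m 1)) {c C : ℝ}
    (hc : 0 < c) (hW : Measurable (Function.uncurry W)) (hWc : ∀ x y, W x y ∈ Icc c C) :
    ∫ y, treeWeight ⊤ W hsym y *
        log (restrictedDensity h2m (deleteTreeEdges h2m H ⊤) W hsym y)
      ≤ log ((kernelDensity W)⁻¹ * ∫ x, edgeProd H W hsym x) := by
  have hd_pos : 0 < kernelDensity W := hc.trans_le (kernelDensity_mem_Icc hW hWc).1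
  have hmean : ∫ y, treeWeight ⊤ W hsym y *
        restrictedDensity h2m (deleteTreeEdges h2m H ⊤) W hsym y
      = (kernelDensity W)⁻¹ * ∫ x, edgeProd H W hsym x := by
    simp_rw [treeWeight_top_fin_two, mul_assoc]
    rw [integral_const_mul, deleteTreeEdges_top_fin_two,
      ← integral_edgeProd_eq_integral_mul_restrictedDensity h2m hsym hedge
        (integrable_edgeProd hsym H hW hc.le hWc)]
  rw [← hmean]
  refine integral_mul_log_le_log_integral_mul_of_mem_Icc (fun y => ?_)
    (integral_treeWeight_top_fin_two hsym hc hW hWc)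
    (measurable_restrictedDensity h2m hsym _ hW).aestronglyMeasurable (pow_pos hc _)
    (restrictedDensity_mem_Icc h2m hsym _ hW hc.le hWc)
  rw [treeWeight_top_fin_two]
  exact mul_nonneg (inv_nonneg.2 hd_pos.le) (hc.le.trans (hWc _ _).1)

end SingleEdge

theorem smooth_edge_implies_sidorenko_general (m : ℕ) (h2m : 2 ≤ m)
    (H : SimpleGraph (Fin m))
    (hedge : H.Adj (Fin.castLE h2m 0) (Fin.castLE h2m 1))
    (hsmooth : IsSmooth h2m H (⊤ : SimpleGraph (Fin 2)))
    (W : I → I → ℝ) (hmeas : Measurable (Function.uncurry W))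
    (hpos : ∃ c : ℝ, 0 < c ∧ ∀ x y, c ≤ W x y)
    (hbdd : ∃ C : ℝ, ∀ x y, W x y ≤ C)
    (hsym : ∀ x y, W x y = W y x) :
    (∫ x : Fin m → I, edgeProd H W hsym x)
      ≥ kernelDensity W ^ H.edgeFinset.card := by
  obtain ⟨c, hc, hcW⟩ := hpos
  obtain ⟨C, hCW⟩ := hbdd
  have hW : ∀ x y, W x y ∈ Icc c C := fun x y => ⟨hcW x y, hCW x y⟩
  have hd_pos : 0 < kernelDensity W := hc.trans_le (kernelDensity_mem_Icc hmeas hW).1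
  have ht_pos : 0 < ∫ x, edgeProd H W hsym x := (pow_pos hc _).trans_le
    (integral_mem_Icc_of_forall_mem_Icc (measurable_edgeProd hsym H hmeas).aestronglyMeasurable
      (edgeProd_mem_Icc hsym H hc.le hW)).1
  have hcard : (deleteTreeEdges h2m H ⊤).edgeFinset.card + 1 = H.edgeFinset.card := by
    rw [deleteTreeEdges_top_fin_two]
    exact card_edgeFinset_deleteEdges_add_one hedge
  rw [ge_iff_le, ← hcard, pow_succ, ← le_div_iff₀ hd_pos, div_eq_inv_mul,
    ← log_le_log_iff (pow_pos hd_pos _) (mul_pos (inv_pos.2 hd_pos) ht_pos), log_pow]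
  exact (hsmooth W hmeas ⟨c, hc, hcW⟩ ⟨C, hCW⟩ hsym).trans
    (integral_treeWeight_mul_log_restrictedDensity_le hsym h2m hedge hc hmeas hW)

/-- If the edge `(x₁,x₂)` (here the first two vertices, carrying the complete graph
`⊤ : SimpleGraph (Fin 2)` as labeled subtree) is smooth in the bipartite graph `H`,
then `H` is a Sidorenko graph: `t(H, W) ≥ d^{|E(H)|}`. -/
theorem smooth_edge_implies_sidorenko (m : ℕ) (h2m : 2 ≤ m)
    (H : SimpleGraph (Fin m)) (hbip : H.Colorable 2)
    (hedge : H.Adj (Fin.castLE h2m 0) (Fin.castLE h2m 1))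
    (hsmooth : IsSmooth h2m H (⊤ : SimpleGraph (Fin 2)))
    (W : I → I → ℝ) (hmeas : Measurable (Function.uncurry W))
    (hpos : ∃ c : ℝ, 0 < c ∧ ∀ x y, c ≤ W x y)
    (hbdd : ∃ C : ℝ, ∀ x y, W x y ≤ C)
    (hsym : ∀ x y, W x y = W y x) :
    (∫ x : Fin m → I, edgeProd H W hsym x)
      ≥ kernelDensity W ^ H.edgeFinset.card :=
  smooth_edge_implies_sidorenko_general m h2m H hedge hsmooth W hmeas hpos hbdd hsym
end
end
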